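/- arXiv:0901.4564 — 6 statements merged into one kernel-verified Lean document; each statement's English description precedes it below -/
import Mathlib

section
/- For every prime p and positive integer n, ν_p(T(n)) = (1/(p−1)) Σ_{j=1}^{n−1} ( S_p(2j) + S_p(2j+1) − S_p(3j+1) − S_p(j) ). In particular for p = 2, ν_2(T(n)) = Σ_{j=0}^{n−1} ( S_2(2j+1) − S_2(3j+1) ). -/
open Nat Finset

/-- The ASM counting sequence `T(n) = ∏_{j=0}^{n-1} (3j+1)!/(n+j)!`. -/
def T (n : ℕ) : ℚ := ∏ j ∈ Finset.range n, ((3 * j + 1)! : ℚ) / ((n + j)! : ℚ)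

/-- The Jacobsthal numbers: `J 0 = J 1 = 1`, `J (n+2) = J (n+1) + 2 * J n`. -/
def J : ℕ → ℕ
  | 0 => 1
  | 1 => 1
  | (n + 2) => J (n + 1) + 2 * J n

/-- Sum of the base-`p` digits of `n`. -/
def S (p n : ℕ) : ℕ := (Nat.digits p n).sum

/-- The generalized sequence `T_p(n) = ∏_{j=0}^{n-1} (pj+1)!/(n+j)!`. -/
def Tp (p n : ℕ) : ℚ := ∏ j ∈ Finset.range n, ((p * j + 1)! : ℚ) / ((n + j)! : ℚ)

lemma padicValRat_prod (p : ℕ) [Fact p.Prime] {ι : Type*} (s : Finset ι) (f : ι → ℚ)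
    (hf : ∀ i ∈ s, f i ≠ 0) :
    padicValRat p (∏ i ∈ s, f i) = ∑ i ∈ s, padicValRat p (f i) := by
  induction s using Finset.cons_induction with
  | empty => simp [padicValRat.one]
  | cons a s ha ih =>
    rw [Finset.prod_cons, Finset.sum_cons,
      padicValRat.mul (hf a (Finset.mem_cons_self _ _))
        (Finset.prod_ne_zero_iff.mpr fun i hi => hf i (Finset.mem_cons_of_mem hi)),
      ih fun i hi => hf i (Finset.mem_cons_of_mem hi)]

lemma legendre_int (p : ℕ) (hp : p.Prime) (m : ℕ) :
    ((p : ℤ) - 1) * (padicValNat p (m !) : ℤ) = (m : ℤ) - (S p m : ℤ) := by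
  haveI : Fact p.Prime := ⟨hp⟩
  have h := sub_one_mul_padicValNat_factorial (p := p) m
  have h1 : (S p m : ℤ) ≤ (m : ℤ) := by exact_mod_cast Nat.digit_sum_le p m
  have hp1 : (1 : ℤ) ≤ (p : ℤ) := by exact_mod_cast hp.one_le
  have := congrArg (Nat.cast : ℕ → ℤ) h
  push_cast [Nat.cast_sub hp.one_le, Nat.cast_sub (Nat.digit_sum_le p m)] at this
  simpa [S] using this

lemma sum_S_pair (p n : ℕ) :
    ∑ m ∈ range (2 * n), S p m = ∑ j ∈ range n, (S p (2 * j) + S p (2 * j + 1)) := by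
  induction n with
  | zero => simp
  | succ n ih =>
    have : 2 * (n + 1) = (2 * n + 1) + 1 := by ring
    rw [this, Finset.sum_range_succ, Finset.sum_range_succ, ih, Finset.sum_range_succ]
    omega

lemma sum_S_shift (p n : ℕ) :
    ∑ j ∈ range n, (S p (n + j) : ℤ) =
      ∑ j ∈ range n, ((S p (2 * j) : ℤ) + (S p (2 * j + 1) : ℤ) - (S p j : ℤ)) := by
  have h1 : ∑ m ∈ range (2 * n), S p m = ∑ m ∈ range n, S p m + ∑ j ∈ range n, S p (n + j) := by
    rw [two_mul, Finset.sum_range_add]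
  have h2 := sum_S_pair p n
  have h3 : ∑ m ∈ range n, S p m + ∑ j ∈ range n, S p (n + j)
      = ∑ j ∈ range n, (S p (2 * j) + S p (2 * j + 1)) := by rw [← h1, h2]
  have h4 := congrArg (Nat.cast : ℕ → ℤ) h3
  push_cast at h4
  rw [Finset.sum_sub_distrib]
  omega

lemma key (p : ℕ) (hp : p.Prime) (n : ℕ) (hn : 0 < n) :
    ((p : ℤ) - 1) * padicValRat p (T n) =
      ∑ j ∈ range n, ((S p (n + j) : ℤ) - (S p (3 * j + 1) : ℤ)) := by
  haveI : Fact p.Prime := ⟨hp⟩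
  have hfac : ∀ m : ℕ, ((m ! : ℚ)) ≠ 0 := fun m => by
    exact_mod_cast (Nat.factorial_pos m).ne'
  have hval : padicValRat p (T n)
      = ∑ j ∈ range n, ((padicValNat p ((3 * j + 1)!) : ℤ) - (padicValNat p ((n + j)!) : ℤ)) := by
    rw [T, padicValRat_prod p _ _ (fun i _ => div_ne_zero (hfac _) (hfac _))]
    refine Finset.sum_congr rfl fun j _ => ?_
    rw [padicValRat.div (hfac _) (hfac _), padicValRat.of_nat, padicValRat.of_nat]
  rw [hval, Finset.mul_sum]
  have hterm : ∀ j ∈ range n,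
      ((p : ℤ) - 1) * ((padicValNat p ((3 * j + 1)!) : ℤ) - (padicValNat p ((n + j)!) : ℤ))
        = ((3 * j + 1 : ℕ) : ℤ) - (S p (3 * j + 1) : ℤ)
          - (((n + j : ℕ) : ℤ) - (S p (n + j) : ℤ)) := by
    intro j _
    rw [mul_sub, legendre_int p hp, legendre_int p hp]
  rw [Finset.sum_congr rfl hterm]
  have hlin : ∑ j ∈ range n, (((3 * j + 1 : ℕ) : ℤ) - ((n + j : ℕ) : ℤ)) = 0 := by
    have hg : (∑ i ∈ range n, (i : ℤ)) * 2 = (n : ℤ) * ((n : ℤ) - 1) := by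
      have := Finset.sum_range_id_mul_two n
      have h' := congrArg (Nat.cast : ℕ → ℤ) this
      push_cast [Nat.cast_sub hn] at h'
      exact h'
    have hrw : ∀ j ∈ range n, ((3 * j + 1 : ℕ) : ℤ) - ((n + j : ℕ) : ℤ)
        = 2 * (j : ℤ) + (1 - (n : ℤ)) := by intro j _; push_cast; ring
    rw [Finset.sum_congr rfl hrw, Finset.sum_add_distrib, ← Finset.mul_sum, Finset.sum_const,
      Finset.card_range, nsmul_eq_mul]
    linarith [hg]
  have : ∀ j ∈ range n,
      ((3 * j + 1 : ℕ) : ℤ) - (S p (3 * j + 1) : ℤ) - (((n + j : ℕ) : ℤ) - (S p (n + j) : ℤ))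
      = (((3 * j + 1 : ℕ) : ℤ) - ((n + j : ℕ) : ℤ))
        + ((S p (n + j) : ℤ) - (S p (3 * j + 1) : ℤ)) := by intro j _; ring
  rw [Finset.sum_congr rfl this, Finset.sum_add_distrib, hlin, zero_add]

lemma S_two_mul (j : ℕ) : S 2 (2 * j) = S 2 j := by
  rcases Nat.eq_zero_or_pos j with h | h
  · simp [h, S]
  · rw [S, Nat.digits_def' (by norm_num) (by positivity)]
    simp [S, Nat.mul_div_cancel_left _ (by norm_num : 0 < 2), Nat.mul_mod_right]

theorem stmt2 (p : ℕ) (hp : p.Prime) (n : ℕ) (hn : 0 < n) :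
    (padicValRat p (T n) : ℚ) =
      (1 / ((p : ℚ) - 1)) *
        ∑ j ∈ Finset.Icc 1 (n - 1),
          ((S p (2 * j) : ℚ) + (S p (2 * j + 1) : ℚ) - (S p (3 * j + 1) : ℚ) - (S p j : ℚ)) ∧
    (padicValRat 2 (T n) : ℤ) =
      ∑ j ∈ Finset.range n, ((S 2 (2 * j + 1) : ℤ) - (S 2 (3 * j + 1) : ℤ)) := by
  have keyp : ∀ q : ℕ, q.Prime →
      ((q : ℤ) - 1) * padicValRat q (T n) =
        ∑ j ∈ range n, ((S q (2 * j) : ℤ) + (S q (2 * j + 1) : ℤ)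
          - (S q (3 * j + 1) : ℤ) - (S q j : ℤ)) := by
    intro q hq
    rw [key q hq n hn]
    rw [Finset.sum_sub_distrib, sum_S_shift, ← Finset.sum_sub_distrib]
    refine Finset.sum_congr rfl fun j _ => by ring
  constructor
  · have hq := keyp p hp
    have hIcc : ∑ j ∈ range n, ((S p (2 * j) : ℤ) + (S p (2 * j + 1) : ℤ)
          - (S p (3 * j + 1) : ℤ) - (S p j : ℤ))
        = ∑ j ∈ Finset.Icc 1 (n - 1), ((S p (2 * j) : ℤ) + (S p (2 * j + 1) : ℤ)
          - (S p (3 * j + 1) : ℤ) - (S p j : ℤ)) := by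
      have h1 : Finset.Icc 1 (n - 1) = Finset.Ico 1 n := by
        rw [← Finset.Ico_add_one_right_eq_Icc]
        congr 1
        omega
      rw [h1, Finset.range_eq_Ico, Finset.sum_eq_sum_Ico_succ_bot hn]
      simp [S]
    rw [hIcc] at hq
    have hcast := congrArg (Int.cast : ℤ → ℚ) hq
    push_cast at hcast
    have hp1 : ((p : ℚ) - 1) ≠ 0 := by
      have : (1 : ℚ) < (p : ℚ) := by exact_mod_cast hp.one_lt
      linarith
    rw [one_div, inv_mul_eq_div, eq_div_iff hp1]
    linarith [hcast]
  · have hq := keyp 2 Nat.prime_two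
    have h2 : (padicValRat 2 (T n) : ℤ) = ∑ j ∈ range n, ((S 2 (2 * j) : ℤ)
        + (S 2 (2 * j + 1) : ℤ) - (S 2 (3 * j + 1) : ℤ) - (S 2 j : ℤ)) := by
      have h22 : ((2 : ℕ) : ℤ) = 2 := by norm_num
      rw [h22] at hq
      linarith [hq]
    rw [h2]
    refine Finset.sum_congr rfl fun j _ => ?_
    rw [S_two_mul]
    ring
end

section
/- For every positive integer n, Σ_{j=1}^{n−1} S_2(2j+1) ≥ Σ_{j=1}^{n−1} S_2(3j+1), where S_2(m) is the sum of binary digits of m. -/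
open Nat Finset

lemma S_two_step (n : ℕ) (hn : n ≠ 0) : S 2 n = n % 2 + S 2 (n / 2) := by
  unfold S
  rw [Nat.digits_def' (by norm_num : (1:ℕ) < 2) (Nat.pos_of_ne_zero hn)]
  simp

lemma S_even (m : ℕ) : S 2 (2 * m) = S 2 m := by
  rcases Nat.eq_zero_or_pos m with h | h
  · simp [h]
  · rw [S_two_step (2 * m) (by omega)]
    simp [Nat.mul_div_cancel_left _ (by norm_num : 0 < 2)]

lemma S_odd (m : ℕ) : S 2 (2 * m + 1) = S 2 m + 1 := by
  rw [S_two_step _ (by omega)]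
  have h1 : (2 * m + 1) % 2 = 1 := by omega
  have h2 : (2 * m + 1) / 2 = m := by omega
  rw [h1, h2]; ring

def dd (n : ℕ) : ℤ := ∑ i ∈ Finset.range n, ((S 2 i : ℤ) + 1 - (S 2 (3 * i + 1) : ℤ))
def ee0 (n : ℕ) : ℤ := ∑ i ∈ Finset.range n, ((S 2 i : ℤ) + 1 - (S 2 (3 * i) : ℤ))
def ee2 (n : ℕ) : ℤ := ∑ i ∈ Finset.range n, ((S 2 i : ℤ) + 1 - (S 2 (3 * i + 2) : ℤ))
def gg (n : ℕ) : ℤ := (S 2 (3 * n) : ℤ) - (S 2 n : ℤ)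
def hh (n : ℕ) : ℤ := (S 2 (3 * n + 1) : ℤ) - (S 2 n : ℤ)
def kk (n : ℕ) : ℤ := (S 2 (3 * n + 2) : ℤ) - (S 2 n : ℤ)

lemma sum_range_two_mul (f : ℕ → ℤ) (n : ℕ) :
    ∑ i ∈ Finset.range (2 * n), f i
      = ∑ i ∈ Finset.range n, (f (2 * i) + f (2 * i + 1)) := by
  induction n with
  | zero => simp
  | succ n ih =>
      rw [Finset.sum_range_succ, ← ih, show 2 * (n + 1) = 2 * n + 1 + 1 by ring,
        Finset.sum_range_succ, Finset.sum_range_succ]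
      ring

lemma dd_even (m : ℕ) : dd (2 * m) = ee0 m + ee2 m := by
  unfold dd ee0 ee2
  rw [sum_range_two_mul, ← Finset.sum_add_distrib]
  refine Finset.sum_congr rfl fun i _ => ?_
  rw [show 3 * (2 * i) + 1 = 2 * (3 * i) + 1 by ring,
      show 3 * (2 * i + 1) + 1 = 2 * (3 * i + 2) by ring,
      S_even, S_odd, S_odd, S_even]
  push_cast; ring

lemma ee0_even (m : ℕ) : ee0 (2 * m) = ee0 m + dd m := by
  unfold dd ee0
  rw [sum_range_two_mul, ← Finset.sum_add_distrib]
  refine Finset.sum_congr rfl fun i _ => ?_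
  rw [show 3 * (2 * i) = 2 * (3 * i) by ring,
      show 3 * (2 * i + 1) = 2 * (3 * i + 1) + 1 by ring,
      S_even, S_odd, S_odd, S_even]
  push_cast; ring

lemma ee2_even (m : ℕ) : ee2 (2 * m) = ee2 m + dd m := by
  unfold dd ee2
  rw [sum_range_two_mul, ← Finset.sum_add_distrib]
  refine Finset.sum_congr rfl fun i _ => ?_
  rw [show 3 * (2 * i) + 2 = 2 * (3 * i + 1) by ring,
      show 3 * (2 * i + 1) + 2 = 2 * (3 * i + 2) + 1 by ring,
      S_even, S_odd, S_odd, S_even]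
  push_cast; ring

lemma dd_odd (m : ℕ) : dd (2 * m + 1) = ee0 m + ee2 m - gg m := by
  unfold dd
  rw [Finset.sum_range_succ]
  have h := dd_even m
  unfold dd at h
  rw [h, show 3 * (2 * m) + 1 = 2 * (3 * m) + 1 by ring, S_odd, S_even, gg]
  push_cast; ring

lemma ee0_odd (m : ℕ) : ee0 (2 * m + 1) = ee0 m + dd m + 1 - gg m := by
  unfold ee0
  rw [Finset.sum_range_succ]
  have h := ee0_even m
  unfold ee0 at h
  rw [h, show 3 * (2 * m) = 2 * (3 * m) by ring, S_even, S_even, gg]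
  push_cast; ring

lemma ee2_odd (m : ℕ) : ee2 (2 * m + 1) = ee2 m + dd m + 1 - hh m := by
  unfold ee2
  rw [Finset.sum_range_succ]
  have h := ee2_even m
  unfold ee2 at h
  rw [h, show 3 * (2 * m) + 2 = 2 * (3 * m + 1) by ring, S_even, S_even, hh]
  push_cast; ring

lemma gg_even (m : ℕ) : gg (2 * m) = gg m := by
  unfold gg
  rw [show 3 * (2 * m) = 2 * (3 * m) by ring, S_even, S_even]

lemma hh_even (m : ℕ) : hh (2 * m) = gg m + 1 := by
  unfold hh gg
  rw [show 3 * (2 * m) + 1 = 2 * (3 * m) + 1 by ring, S_odd, S_even]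
  push_cast; ring

lemma kk_even (m : ℕ) : kk (2 * m) = hh m := by
  unfold kk hh
  rw [show 3 * (2 * m) + 2 = 2 * (3 * m + 1) by ring, S_even, S_even]

lemma gg_odd (m : ℕ) : gg (2 * m + 1) = hh m := by
  unfold gg hh
  rw [show 3 * (2 * m + 1) = 2 * (3 * m + 1) + 1 by ring, S_odd, S_odd]
  push_cast; ring

lemma hh_odd (m : ℕ) : hh (2 * m + 1) = kk m - 1 := by
  unfold hh kk
  rw [show 3 * (2 * m + 1) + 1 = 2 * (3 * m + 2) by ring, S_even, S_odd]
  push_cast; ring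

lemma kk_odd (m : ℕ) : kk (2 * m + 1) = kk m := by
  unfold kk
  rw [show 3 * (2 * m + 1) + 2 = 2 * (3 * m + 2) + 1 by ring, S_odd, S_odd]
  push_cast; ring

lemma master : ∀ n : ℕ, 1 ≤ n →
    0 ≤ dd n ∧ 1 ≤ ee0 n ∧ 0 ≤ ee2 n ∧ gg n ≤ ee0 n ∧ hh n ≤ dd n + 1 ∧
    kk n ≤ ee2 n + 1 ∧ hh n ≤ 2 * dd n ∧ hh n ≤ dd n + ee2 n + 1 ∧
    kk n ≤ ee0 n + ee2 n ∧ kk n ≤ 2 * ee2 n + 1 := by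
  intro n
  induction n using Nat.strong_induction_on with
  | _ n ih =>
    intro hn
    rcases eq_or_lt_of_le hn with h1 | h1
    · -- n = 1
      have hn1 : n = 1 := h1.symm
      subst hn1
      have v1 : S 2 1 = 1 := by simp [S]
      have v2 : S 2 2 = 1 := by simp [S]
      have v3 : S 2 3 = 2 := by simp [S]
      have v4 : S 2 4 = 1 := by simp [S]
      have v5 : S 2 5 = 2 := by simp [S]
      have v0 : S 2 0 = 0 := by simp [S]
      simp only [dd, ee0, ee2, gg, hh, kk, Finset.sum_range_one]
      norm_num [v0, v1, v2, v3, v4, v5]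
    · -- n ≥ 2 : write n = 2m or 2m+1 with 1 ≤ m < n
      have hm : 1 ≤ n / 2 := by omega
      have hlt : n / 2 < n := by omega
      obtain ⟨d0, e00, e20, g0, h0, k0, hq0, hq1, hq2, hq3⟩ := ih (n / 2) hlt hm
      rcases Nat.even_or_odd n with ⟨m, hme⟩ | ⟨m, hmo⟩
      · have hmn : m = n / 2 := by omega
        have hne : n = 2 * m := by omega
        subst hmn; rw [hne, dd_even, ee0_even, ee2_even, gg_even, hh_even, kk_even]
        omega
      · have hmn : m = n / 2 := by omega
        have hne : n = 2 * m + 1 := by omega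
        subst hmn; rw [hne, dd_odd, ee0_odd, ee2_odd, gg_odd, hh_odd, kk_odd]
        omega

theorem stmt3 (n : ℕ) (hn : 0 < n) :
    ∑ j ∈ Finset.Icc 1 (n - 1), S 2 (3 * j + 1) ≤
      ∑ j ∈ Finset.Icc 1 (n - 1), S 2 (2 * j + 1) := by
  have hdd : 0 ≤ dd n := (master n hn).1
  have key : ∑ j ∈ Finset.range n, S 2 (3 * j + 1) ≤ ∑ j ∈ Finset.range n, S 2 (2 * j + 1) := by
    have : (∑ j ∈ Finset.range n, (S 2 (3 * j + 1) : ℤ))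
        ≤ ∑ j ∈ Finset.range n, ((S 2 (2 * j + 1) : ℤ)) := by
      have hsplit : ∀ j : ℕ, (S 2 (2 * j + 1) : ℤ) = (S 2 j : ℤ) + 1 := by
        intro j; rw [S_odd]; push_cast; ring
      have := hdd
      unfold dd at this
      rw [Finset.sum_sub_distrib] at this
      simp only [hsplit]
      omega
    exact_mod_cast this
  have hIcc : Finset.Icc 1 (n - 1) = Finset.Ico 1 n := by
    rw [← Finset.Ico_add_one_right_eq_Icc]
    congr 1
    omega
  have hsplit : ∀ f : ℕ → ℕ, ∑ j ∈ Finset.range n, f j = f 0 + ∑ j ∈ Finset.Ico 1 n, f j := by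
    intro f
    rw [Finset.range_eq_Ico]
    exact Finset.sum_eq_sum_Ico_succ_bot hn f
  have h1 := hsplit (fun j => S 2 (3 * j + 1))
  have h2 := hsplit (fun j => S 2 (2 * j + 1))
  rw [hIcc]
  norm_num at h1 h2
  omega
end

section
/- For every n and every i with 0 < i ≤ 2J_{n−3}, ν_2(T(J_n + i)) = i + ν_2(T(J_{n−2} + i)). -/
open Nat Finset

/-! ### Binary digit sum lemmas -/

lemma S2_rec (n : ℕ) : S 2 n = n % 2 + S 2 (n / 2) := by
  rcases Nat.eq_zero_or_pos n with h | h
  · simp [h, S]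
  · rw [S, Nat.digits_def' one_lt_two h, List.sum_cons]; rfl

lemma S2_block : ∀ k q r : ℕ, r < 2 ^ k → S 2 (2 ^ k * q + r) = S 2 q + S 2 r
  | 0, q, r, hr => by
    interval_cases r
    simp [S]
  | (k+1), q, r, hr => by
    rcases Nat.eq_zero_or_pos q with rfl | hq
    · simp [S]
    have h2 : (2:ℕ) ^ (k+1) * q + r = 2 * (2 ^ k * q + r / 2) + r % 2 := by
      have := Nat.div_add_mod r 2
      ring_nf
      omega
    have hmod : (2 ^ (k+1) * q + r) % 2 = r % 2 := by omega
    have hdiv : (2 ^ (k+1) * q + r) / 2 = 2 ^ k * q + r / 2 := by omega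
    have hr2 : r / 2 < 2 ^ k := by
      have : (2:ℕ) ^ (k+1) = 2 * 2 ^ k := by ring
      omega
    rw [S2_rec (2 ^ (k+1) * q + r), hmod, hdiv, S2_block k q (r/2) hr2, S2_rec r]
    ring

lemma S2_one : S 2 1 = 1 := by simp [S]

lemma S2_pow_add {k m : ℕ} (h : m < 2 ^ k) : S 2 (2 ^ k + m) = S 2 m + 1 := by
  have h1 := S2_block k 1 m h
  rw [mul_one, S2_one] at h1
  omega

/-- increments of the valuation -/
def inc (m : ℕ) : ℤ := (S 2 m : ℤ) + 1 - S 2 (3 * m + 1)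

/-- partial sums: `Gz N` will equal `ν₂(T N)`. -/
def Gz (N : ℕ) : ℤ := ∑ m ∈ Finset.range N, inc m

lemma Gz_succ (N : ℕ) : Gz (N + 1) = Gz N + inc N := Finset.sum_range_succ _ _

lemma inc_up {k m : ℕ} (h1 : 2 ^ k ≤ 3 * m + 1) (h2 : 3 * m + 1 < 2 ^ (k+1)) :
    inc (m + 2 ^ k) = inc m + 1 := by
  have hpow : (2:ℕ) ^ (k+1) = 2 ^ k * 2 := pow_succ 2 k
  have hpow2 : (2:ℕ) ^ (k+2) = 2 ^ (k+1) * 2 := pow_succ 2 (k+1)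
  have hm : m < 2 ^ k := by omega
  set r := 3 * m + 1 - 2 ^ k with hr
  have hrlt : r < 2 ^ k := by omega
  have e1 : S 2 (m + 2 ^ k) = S 2 m + 1 := by rw [add_comm]; exact S2_pow_add hm
  have e2 : S 2 (3 * m + 1) = S 2 r + 1 := by
    have : 3 * m + 1 = 2 ^ k + r := by omega
    rw [this, S2_pow_add hrlt]
  have e3 : S 2 (3 * (m + 2 ^ k) + 1) = S 2 r + 1 := by
    have heq : 3 * (m + 2 ^ k) + 1 = 2 ^ (k+2) + r := by omega
    rw [heq, S2_pow_add (by omega : r < 2 ^ (k+2))]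
  simp [inc, e1, e2, e3]
  push_cast
  ring

lemma inc_down {k m : ℕ} (h : 3 * m + 1 < 2 ^ k) : inc (m + 2 ^ k) = inc m - 1 := by
  have hm : m < 2 ^ k := by omega
  have e1 : S 2 (m + 2 ^ k) = S 2 m + 1 := by rw [add_comm]; exact S2_pow_add hm
  have e3 : S 2 (3 * (m + 2 ^ k) + 1) = S 2 (3 * m + 1) + 2 := by
    have heq : 3 * (m + 2 ^ k) + 1 = 2 ^ k * 3 + (3 * m + 1) := by ring
    have := S2_block k 3 (3 * m + 1) h
    rw [heq, this]
    have : S 2 3 = 2 := by simp [S]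
    omega
  simp [inc, e1, e3]
  push_cast
  ring

lemma inc_zero {k m : ℕ} (hm : m < 2 ^ k) (h : 2 ^ (k+1) ≤ 3 * m + 1) :
    inc (m + 2 ^ k) = inc m := by
  have hpow : (2:ℕ) ^ (k+1) = 2 ^ k * 2 := pow_succ 2 k
  set s := 3 * m + 1 - 2 ^ (k+1) with hs
  have hslt : s < 2 ^ k := by omega
  have e1 : S 2 (m + 2 ^ k) = S 2 m + 1 := by rw [add_comm]; exact S2_pow_add hm
  have e2 : S 2 (3 * m + 1) = S 2 s + 1 := by
    have heq : 3 * m + 1 = 2 ^ (k+1) + s := by omega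
    rw [heq, S2_pow_add (by omega : s < 2 ^ (k+1))]
  have e3 : S 2 (3 * (m + 2 ^ k) + 1) = S 2 s + 2 := by
    have heq : 3 * (m + 2 ^ k) + 1 = 2 ^ k * 5 + s := by omega
    have := S2_block k 5 s hslt
    rw [heq, this]
    have : S 2 5 = 2 := by simp [S]
    omega
  simp [inc, e1, e2, e3]
  push_cast
  ring

/-! ### Jacobsthal lemmas -/

lemma J_pos : ∀ r, 0 < J r
  | 0 => one_pos
  | 1 => one_pos
  | (r+2) => by
    have := J_pos r
    have := J_pos (r+1)
    simp only [J]
    omega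

lemma Jstep : ∀ r, J (r + 2) = J r + 2 ^ (r + 1)
  | 0 => by simp [J]
  | 1 => by simp [J]
  | (r+2) => by
    have h1 : J (r+2) = J r + 2 ^ (r+1) := Jstep r
    have h2 : J (r+3) = J (r+1) + 2 ^ (r+2) := Jstep (r+1)
    show J (r+4) = J (r+2) + 2 ^ (r+3)
    have e1 : J (r+4) = J (r+3) + 2 * J (r+2) := rfl
    have e2 : J (r+2) = J (r+1) + 2 * J r := rfl
    have p2 : (2:ℕ) ^ (r+2) = 2 ^ (r+1) * 2 := pow_succ 2 (r+1)
    have p3 : (2:ℕ) ^ (r+3) = 2 ^ (r+2) * 2 := pow_succ 2 (r+2)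
    omega

lemma Jbound : ∀ r, 2 ^ (r+1) ≤ 3 * J r + 1 ∧ 3 * J r ≤ 2 ^ (r+1) + 1
  | 0 => by simp [J]
  | 1 => by simp [J]
  | (r+2) => by
    have h : 2 ^ (r+1) ≤ 3 * J r + 1 ∧ 3 * J r ≤ 2 ^ (r+1) + 1 := Jbound r
    have hs : J (r+2) = J r + 2 ^ (r+1) := Jstep r
    show 2 ^ (r+3) ≤ 3 * J (r+2) + 1 ∧ 3 * J (r+2) ≤ 2 ^ (r+3) + 1
    have p2 : (2:ℕ) ^ (r+2) = 2 ^ (r+1) * 2 := pow_succ 2 (r+1)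
    have p3 : (2:ℕ) ^ (r+3) = 2 ^ (r+2) * 2 := pow_succ 2 (r+2)
    omega

lemma pow2_mod3 : ∀ k : ℕ, 2 ^ k % 3 = 1 ∨ 2 ^ k % 3 = 2
  | 0 => by norm_num
  | (k+1) => by
    have h1 : 2 ^ k % 3 = 1 ∨ 2 ^ k % 3 = 2 := pow2_mod3 k
    have h2 : (2:ℕ) ^ (k+1) = 2 ^ k * 2 := pow_succ 2 k
    omega

lemma lt_thresh (r m : ℕ) : 3 * m + 1 < 2 ^ (r+1) ↔ m < J r := by
  have h : 2 ^ (r+1) ≤ 3 * J r + 1 ∧ 3 * J r ≤ 2 ^ (r+1) + 1 := Jbound r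
  have h2 : 2 ^ (r+1) % 3 = 1 ∨ 2 ^ (r+1) % 3 = 2 := pow2_mod3 (r+1)
  omega

lemma J_mono : ∀ r, J r ≤ J (r+1)
  | 0 => le_refl _
  | (r+1) => by
    have h1 : 0 < J r := J_pos r
    have h2 : J (r+2) = J (r+1) + 2 * J r := rfl
    show J (r+1) ≤ J (r+2)
    omega

/-! ### Counting sums -/

lemma sum_indicator (N c : ℕ) (h : c ≤ N) :
    ∑ m ∈ Finset.range N, (if m < c then (1:ℤ) else 0) = c := by
  rw [Finset.sum_ite, Finset.sum_const, Finset.sum_const]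
  have : Finset.filter (fun m => m < c) (Finset.range N) = Finset.range c := by
    ext x; simp; omega
  rw [this]
  simp

lemma Gpow : ∀ k, Gz (2 ^ (k+1)) = J k
  | 0 => by
    have : Gz 2 = inc 0 + inc 1 := by
      simp [Gz, Finset.sum_range_succ]
    rw [show (2:ℕ)^1 = 2 by norm_num, this]
    simp [inc, S, J]
  | (k+1) => by
    have IH := Gpow k
    have hpow : (2:ℕ) ^ (k+2) = 2 ^ (k+1) + 2 ^ (k+1) := by ring
    have hsplit : Gz (2 ^ (k+2)) =
        Gz (2 ^ (k+1)) + ∑ m ∈ Finset.range (2 ^ (k+1)), inc (2 ^ (k+1) + m) := by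
      rw [Gz, hpow, Finset.sum_range_add]; rfl
    have hp2 : (2:ℕ) ^ (k+2) = 2 ^ (k+1) * 2 := pow_succ 2 (k+1)
    have hbk : 2 ^ (k+1) ≤ 3 * J k + 1 ∧ 3 * J k ≤ 2 ^ (k+1) + 1 := Jbound k
    have hbk1 : 2 ^ (k+2) ≤ 3 * J (k+1) + 1 ∧ 3 * J (k+1) ≤ 2 ^ (k+2) + 1 := Jbound (k+1)
    have hJk : J k ≤ 2 ^ (k+1) := by omega
    have hJk1 : J (k+1) ≤ 2 ^ (k+1) := by omega
    have hterm : ∀ m ∈ Finset.range (2 ^ (k+1)), inc (2 ^ (k+1) + m) =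
        inc m + ((if m < J (k+1) then (1:ℤ) else 0) - 2 * (if m < J k then (1:ℤ) else 0)) := by
      intro m hm
      rw [Finset.mem_range] at hm
      rw [add_comm (2 ^ (k+1)) m]
      by_cases h1 : 3 * m + 1 < 2 ^ (k+1)
      · have hmk : m < J k := (lt_thresh k m).mp (by omega)
        have hmk1 : m < J (k+1) := (lt_thresh (k+1) m).mp (by omega)
        rw [inc_down h1, if_pos hmk, if_pos hmk1]
        ring
      · by_cases h2 : 3 * m + 1 < 2 ^ (k+2)
        · have hmk : ¬ m < J k := fun hc => h1 ((lt_thresh k m).mpr hc)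
          have hmk1 : m < J (k+1) := (lt_thresh (k+1) m).mp h2
          rw [inc_up (by omega) h2, if_pos hmk1, if_neg hmk]
          ring
        · have hmk : ¬ m < J k := fun hc => h1 ((lt_thresh k m).mpr hc)
          have hmk1 : ¬ m < J (k+1) := fun hc => h2 ((lt_thresh (k+1) m).mpr hc)
          rw [inc_zero hm (by omega), if_neg hmk, if_neg hmk1]
          ring
    rw [hsplit, Finset.sum_congr rfl hterm, Finset.sum_add_distrib, Finset.sum_sub_distrib,
      ← Finset.mul_sum, sum_indicator _ _ hJk1, sum_indicator _ _ hJk]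
    have hGz : (∑ m ∈ Finset.range (2 ^ (k+1)), inc m) = Gz (2 ^ (k+1)) := rfl
    rw [hGz, IH]
    ring

/-! ### The recursion for `Gz` -/

lemma Gbase (n : ℕ) : Gz (2 ^ (n+2) + J (n+1)) = Gz (J (n+1)) := by
  have hb : 2 ^ (n+2) ≤ 3 * J (n+1) + 1 ∧ 3 * J (n+1) ≤ 2 ^ (n+2) + 1 := Jbound (n+1)
  have hsplit : Gz (2 ^ (n+2) + J (n+1)) =
      Gz (2 ^ (n+2)) + ∑ m ∈ Finset.range (J (n+1)), inc (2 ^ (n+2) + m) := by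
    rw [Gz, Finset.sum_range_add]; rfl
  have hterm : ∀ m ∈ Finset.range (J (n+1)), inc (2 ^ (n+2) + m) = inc m - 1 := by
    intro m hm
    rw [Finset.mem_range] at hm
    rw [add_comm]
    exact inc_down (by omega)
  have hGp : Gz (2 ^ (n+2)) = J (n+1) := Gpow (n+1)
  rw [hsplit, Finset.sum_congr rfl hterm, Finset.sum_sub_distrib, hGp]
  have h1 : (∑ m ∈ Finset.range (J (n+1)), inc m) = Gz (J (n+1)) := rfl
  rw [h1, Finset.sum_const, Finset.card_range]
  push_cast
  ring

lemma Gmain (n : ℕ) : ∀ i, i ≤ 2 * J n → Gz (2 ^ (n+2) + J (n+1) + i) = Gz (J (n+1) + i) + i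
  | 0, _ => by simpa using Gbase n
  | (i+1), h => by
    have IH := Gmain n i (by omega)
    have hb1 : 2 ^ (n+2) ≤ 3 * J (n+1) + 1 ∧ 3 * J (n+1) ≤ 2 ^ (n+2) + 1 := Jbound (n+1)
    have hb2 : 2 ^ (n+3) ≤ 3 * J (n+2) + 1 ∧ 3 * J (n+2) ≤ 2 ^ (n+3) + 1 := Jbound (n+2)
    have hrec : J (n+2) = J (n+1) + 2 * J n := rfl
    have hp : (2:ℕ) ^ (n+3) = 2 ^ (n+2) * 2 := pow_succ 2 (n+2)
    have hp' : (2:ℕ) ^ (n+2+1) = 2 ^ (n+2) * 2 := pow_succ 2 (n+2)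
    have e1 : Gz (2 ^ (n+2) + J (n+1) + (i+1)) =
        Gz (2 ^ (n+2) + J (n+1) + i) + inc (2 ^ (n+2) + J (n+1) + i) := by
      rw [show 2 ^ (n+2) + J (n+1) + (i+1) = (2 ^ (n+2) + J (n+1) + i) + 1 by ring, Gz_succ]
    have e2 : Gz (J (n+1) + (i+1)) = Gz (J (n+1) + i) + inc (J (n+1) + i) := by
      rw [show J (n+1) + (i+1) = (J (n+1) + i) + 1 by ring, Gz_succ]
    have e3 : inc (2 ^ (n+2) + J (n+1) + i) = inc (J (n+1) + i) + 1 := by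
      rw [show 2 ^ (n+2) + J (n+1) + i = (J (n+1) + i) + 2 ^ (n+2) by ring]
      exact inc_up (by omega) (by omega)
    rw [e1, e2, e3, IH]
    push_cast
    ring

/-! ### The 2-adic valuation of `T` -/

lemma padicValNat_factorial_int (m : ℕ) : (padicValNat 2 (m !) : ℤ) = m - S 2 m := by
  haveI : Fact (Nat.Prime 2) := ⟨Nat.prime_two⟩
  have h := sub_one_mul_padicValNat_factorial (p := 2) m
  norm_num at h
  have hle : (Nat.digits 2 m).sum ≤ m := Nat.digit_sum_le 2 m
  simp only [S]
  omega

lemma padicValNat_prod_factorials (s : Finset ℕ) (f : ℕ → ℕ) :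
    (padicValNat 2 (∏ j ∈ s, (f j)!) : ℤ) = ∑ j ∈ s, (padicValNat 2 ((f j)!) : ℤ) := by
  haveI : Fact (Nat.Prime 2) := ⟨Nat.prime_two⟩
  induction s using Finset.cons_induction with
  | empty => simp
  | cons a s ha ih =>
    rw [Finset.prod_cons, padicValNat.mul (Nat.factorial_ne_zero _)
      (Finset.prod_ne_zero_iff.mpr (fun j _ => Nat.factorial_ne_zero _)), Finset.sum_cons, ← ih]
    push_cast
    ring

/-- partial sums of binary digit sums -/
def W (N : ℕ) : ℤ := ∑ t ∈ Finset.range N, (S 2 t : ℤ)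

lemma S2_double (N : ℕ) : S 2 (2*N) = S 2 N := by
  have h1 : (2*N) % 2 = 0 := by omega
  have h2 : (2*N) / 2 = N := by omega
  rw [S2_rec (2*N), h1, h2, Nat.zero_add]

lemma S2_double_add_one (N : ℕ) : S 2 (2*N+1) = S 2 N + 1 := by
  have h1 : (2*N+1) % 2 = 1 := by omega
  have h2 : (2*N+1) / 2 = N := by omega
  rw [S2_rec (2*N+1), h1, h2, Nat.add_comm]

lemma Wdouble : ∀ N, W (2*N) = 2 * W N + N
  | 0 => by simp [W]
  | (N+1) => by
    have IH := Wdouble N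
    simp only [W] at IH ⊢
    rw [show 2*(N+1) = 2*N+1+1 by ring, Finset.sum_range_succ, Finset.sum_range_succ,
      Finset.sum_range_succ (f := fun t => (S 2 t : ℤ)) (n := N)]
    rw [S2_double, S2_double_add_one]
    push_cast
    linarith [IH]

lemma sum_S2_shift (N : ℕ) : ∑ j ∈ Finset.range N, (S 2 (N+j) : ℤ) = W N + N := by
  have h : W (N + N) = W N + ∑ j ∈ Finset.range N, (S 2 (N+j) : ℤ) := by
    rw [W, Finset.sum_range_add]; rfl
  have h2 : W (2*N) = 2 * W N + N := Wdouble N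
  rw [show N + N = 2*N by ring] at h
  omega

lemma gauss_int : ∀ N : ℕ, 2 * ∑ j ∈ Finset.range N, (j:ℤ) = N * (N-1)
  | 0 => by simp
  | (N+1) => by
    rw [Finset.sum_range_succ]
    have h := gauss_int N
    push_cast
    linear_combination h

lemma linear_cancel (N : ℕ) :
    ∑ j ∈ Finset.range N, ((3*j+1 : ℕ) : ℤ) = ∑ j ∈ Finset.range N, ((N+j : ℕ) : ℤ) := by
  have h := gauss_int N
  push_cast
  simp only [Finset.sum_add_distrib, Finset.sum_const, Finset.card_range, nsmul_eq_mul,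
    mul_one, ← Finset.mul_sum]
  linear_combination h

lemma GzW (N : ℕ) : Gz N = W N + N - ∑ m ∈ Finset.range N, (S 2 (3*m+1) : ℤ) := by
  simp only [Gz, inc, W]
  rw [Finset.sum_sub_distrib, Finset.sum_add_distrib, Finset.sum_const, Finset.card_range]
  push_cast
  ring

lemma val_T (N : ℕ) : padicValRat 2 (T N) = Gz N := by
  haveI : Fact (Nat.Prime 2) := ⟨Nat.prime_two⟩
  have hA : (∏ j ∈ Finset.range N, (3*j+1)!) ≠ 0 :=
    Finset.prod_ne_zero_iff.mpr fun _ _ => Nat.factorial_ne_zero _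
  have hB : (∏ j ∈ Finset.range N, (N+j)!) ≠ 0 :=
    Finset.prod_ne_zero_iff.mpr fun _ _ => Nat.factorial_ne_zero _
  have hT : T N = ((∏ j ∈ Finset.range N, (3*j+1)! : ℕ) : ℚ) /
      ((∏ j ∈ Finset.range N, (N+j)! : ℕ) : ℚ) := by
    rw [T, Finset.prod_div_distrib]
    push_cast
    ring
  rw [hT, padicValRat.div (p := 2) (by exact_mod_cast hA) (by exact_mod_cast hB),
    padicValRat.of_nat, padicValRat.of_nat,
    padicValNat_prod_factorials _ (fun j => 3*j+1), padicValNat_prod_factorials _ (fun j => N+j),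
    Finset.sum_congr rfl (fun j _ => padicValNat_factorial_int (3*j+1)),
    Finset.sum_congr rfl (fun j _ => padicValNat_factorial_int (N+j))]
  have h1 : ∑ j ∈ Finset.range N, (S 2 (N+j) : ℤ) = W N + N := sum_S2_shift N
  have h2 := linear_cancel N
  have h3 := GzW N
  rw [Finset.sum_sub_distrib, Finset.sum_sub_distrib]
  push_cast at h2 ⊢
  linarith [h1, h2, h3]

theorem stmt10 (n i : ℕ) (hi : 0 < i) (hi' : i ≤ 2 * J n) :
    padicValRat 2 (T (J (n + 3) + i)) = (i : ℤ) + padicValRat 2 (T (J (n + 1) + i)) := by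
  have hJ : J (n+3) = J (n+1) + 2 ^ (n+2) := Jstep (n+1)
  rw [val_T, val_T, hJ, show J (n+1) + 2^(n+2) + i = 2^(n+2) + J (n+1) + i by ring,
    Gmain n i hi']
  ring
end

section
/- For all n ≥ 0 and all a with 0 ≤ a ≤ 3^n, ν_3(T(2·3^n + a)) = ν_3(T(a)) (with the convention that both sides are interpreted for a ≥ 1, and the cases a = 0, 3^n give valuation 0). -/
open Nat Finset

lemma S_eq (x : ℕ) : S 3 x = x % 3 + S 3 (x / 3) := by
  rcases Nat.eq_zero_or_pos x with h | h
  · simp [h, S]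
  · rw [S, Nat.digits_def' (by norm_num) h]; simp [S]

lemma S_split (k : ℕ) : ∀ c x : ℕ, x < 3 ^ k → S 3 (c * 3 ^ k + x) = S 3 c + S 3 x := by
  induction k with
  | zero => intro c x hx; interval_cases x; simp [S]
  | succ k ih =>
    intro c x hx
    rcases Nat.eq_zero_or_pos c with hc | hc
    · simp [hc, S]
    have e : c * 3 ^ (k+1) + x = 3 * (c * 3 ^ k) + x := by rw [pow_succ]; ring
    have h1 : (3 * (c * 3 ^ k) + x) % 3 = x % 3 := by omega
    have h2 : (3 * (c * 3 ^ k) + x) / 3 = c * 3 ^ k + x / 3 := by omega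
    have h3 : x / 3 < 3 ^ k := by
      rw [pow_succ] at hx; omega
    rw [e]
    rw [S_eq (3 * (c * 3 ^ k) + x), h1, h2, ih c _ h3, S_eq x]
    ring

def F3 (m : ℕ) : ℤ := ∑ j ∈ Finset.range m, (S 3 j : ℤ)

lemma F3_add (a b : ℕ) : F3 (a + b) = F3 a + ∑ j ∈ Finset.range b, (S 3 (a + j) : ℤ) := by
  rw [F3, Finset.sum_range_add]; rfl

lemma F3_split {k : ℕ} (c : ℕ) {t : ℕ} (ht : t ≤ 3 ^ k) :
    F3 (c * 3 ^ k + t) = F3 (c * 3 ^ k) + (S 3 c : ℤ) * t + F3 t := by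
  rw [F3_add]
  have : ∀ j ∈ Finset.range t, (S 3 (c * 3 ^ k + j) : ℤ) = (S 3 c : ℤ) + (S 3 j : ℤ) := by
    intro j hj
    rw [S_split k c j (by simp at hj; omega)]
    push_cast; ring
  rw [Finset.sum_congr rfl this, Finset.sum_add_distrib]
  simp only [Finset.sum_const, Finset.card_range, nsmul_eq_mul, F3]
  ring

lemma legendre3 (k : ℕ) : (2 : ℤ) * padicValNat 3 (k !) = (k : ℤ) - S 3 k := by
  haveI : Fact (Nat.Prime 3) := ⟨by norm_num⟩
  have h := sub_one_mul_padicValNat_factorial (p := 3) k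
  have hle : S 3 k ≤ k := Nat.digit_sum_le 3 k
  have : (3 - 1) * padicValNat 3 (k !) = k - S 3 k := h
  omega

lemma pvr_prod {s : Finset ℕ} {f : ℕ → ℚ} (hf : ∀ i ∈ s, f i ≠ 0) :
    padicValRat 3 (∏ i ∈ s, f i) = ∑ i ∈ s, padicValRat 3 (f i) := by
  haveI : Fact (Nat.Prime 3) := ⟨by norm_num⟩
  induction s using Finset.cons_induction with
  | empty => simp
  | cons i s his ih =>
    rw [Finset.prod_cons, Finset.sum_cons,
      padicValRat.mul (hf i (Finset.mem_cons_self i s))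
        (Finset.prod_ne_zero_iff.mpr fun j hj => hf j (Finset.mem_cons_of_mem hj)),
      ih fun j hj => hf j (Finset.mem_cons_of_mem hj)]

lemma two_nu (m : ℕ) (hm : 1 ≤ m) :
    2 * padicValRat 3 (T m) = F3 (2 * m) - 2 * F3 m - m := by
  haveI : Fact (Nat.Prime 3) := ⟨by norm_num⟩
  have hfac : ∀ k : ℕ, ((k ! : ℚ)) ≠ 0 := fun k => Nat.cast_ne_zero.mpr (Nat.factorial_ne_zero k)
  rw [T, pvr_prod (fun i _ => div_ne_zero (hfac _) (hfac _))]
  have hterm : ∀ j ∈ Finset.range m, padicValRat 3 (((3 * j + 1)! : ℚ) / ((m + j)! : ℚ))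
      = (padicValNat 3 ((3 * j + 1)!) : ℤ) - (padicValNat 3 ((m + j)!) : ℤ) := by
    intro j _
    rw [padicValRat.div (hfac _) (hfac _), padicValRat.of_nat, padicValRat.of_nat]
  rw [Finset.sum_congr rfl hterm]
  have key : ∀ j ∈ Finset.range m,
      2 * ((padicValNat 3 ((3 * j + 1)!) : ℤ) - (padicValNat 3 ((m + j)!) : ℤ))
      = (2 * j - m : ℤ) - (S 3 j : ℤ) + (S 3 (m + j) : ℤ) := by
    intro j _
    have h1 := legendre3 (3 * j + 1)
    have h2 := legendre3 (m + j)
    have h3 : S 3 (3 * j + 1) = S 3 j + 1 := by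
      rw [S_eq (3 * j + 1)]
      have : (3 * j + 1) % 3 = 1 := by omega
      have h' : (3 * j + 1) / 3 = j := by omega
      rw [this, h']; ring
    rw [h3] at h1
    push_cast at h1 h2 ⊢
    linarith
  rw [Finset.mul_sum, Finset.sum_congr rfl key]
  have hsplit : F3 (2 * m) = F3 m + ∑ j ∈ Finset.range m, (S 3 (m + j) : ℤ) := by
    rw [two_mul, F3_add]
  have hgauss : (∑ j ∈ Finset.range m, (j : ℤ)) * 2 = (m : ℤ) * ((m : ℤ) - 1) := by
    have h := Finset.sum_range_id_mul_two m
    have h2 : ((∑ i ∈ Finset.range m, i : ℕ) : ℤ) * 2 = (m : ℤ) * (((m - 1 : ℕ)) : ℤ) := by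
      exact_mod_cast h
    rw [Nat.cast_sub hm] at h2
    push_cast at h2
    simpa using h2
  have : ∑ j ∈ Finset.range m, ((2 * j - m : ℤ) - (S 3 j : ℤ) + (S 3 (m + j) : ℤ))
      = (∑ j ∈ Finset.range m, (2 * (j : ℤ) - m)) - F3 m + (F3 (2 * m) - F3 m) := by
    rw [hsplit]; rw [Finset.sum_add_distrib, Finset.sum_sub_distrib, F3]; ring
  rw [this, Finset.sum_sub_distrib, Finset.sum_const, ← Finset.mul_sum]
  simp only [Finset.card_range, nsmul_eq_mul]
  linarith

theorem stmt17 (n a : ℕ) (ha : 1 ≤ a) (ha' : a ≤ 3 ^ n) :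
    padicValRat 3 (T (2 * 3 ^ n + a)) = padicValRat 3 (T a) := by
  have hS0 : S 3 0 = 0 := by simp [S]
  have hS1 : S 3 1 = 1 := by rw [S_eq]; norm_num [hS0]
  have hS2 : S 3 2 = 2 := by rw [S_eq]; norm_num [hS0]
  have hNpos : 1 ≤ 3 ^ n := Nat.one_le_pow _ _ (by norm_num)
  have d1 : F3 (2 * 3 ^ n + a) = F3 (2 * 3 ^ n) + 2 * a + F3 a := by
    have h := F3_split (k := n) 2 (t := a) ha'
    rw [hS2] at h; push_cast at h ⊢; linarith
  have d2 : F3 (2 * 3 ^ n) = 2 * F3 (3 ^ n) + 3 ^ n := by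
    have h := F3_split (k := n) 1 (t := 3 ^ n) le_rfl
    simp only [one_mul] at h
    have e : 3 ^ n + 3 ^ n = 2 * 3 ^ n := by ring
    rw [hS1, e] at h; push_cast at h ⊢; linarith
  have d4 : F3 (3 * 3 ^ n) = 3 * F3 (3 ^ n) + 3 * 3 ^ n := by
    have h := F3_split (k := n) 2 (t := 3 ^ n) le_rfl
    have e : 2 * 3 ^ n + 3 ^ n = 3 * 3 ^ n := by ring
    rw [hS2, e] at h; push_cast at h ⊢; push_cast at d2; linarith
  have d3 : F3 (4 * 3 ^ n + 2 * a) = F3 (3 * 3 ^ n) + ((3 ^ n : ℤ) + 2 * a) + F3 (3 ^ n + 2 * a) := by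
    have hle : 3 ^ n + 2 * a ≤ 3 ^ (n + 1) := by rw [pow_succ]; omega
    have h := F3_split (k := n + 1) 1 (t := 3 ^ n + 2 * a) hle
    simp only [one_mul] at h
    have e : 3 ^ (n + 1) + (3 ^ n + 2 * a) = 4 * 3 ^ n + 2 * a := by rw [pow_succ]; ring
    have e2 : (3 : ℕ) ^ (n + 1) = 3 * 3 ^ n := by rw [pow_succ]; ring
    rw [e, e2, hS1] at h; push_cast at h ⊢; linarith
  have d5 : F3 (3 ^ n + 2 * a) = F3 (3 ^ n) + 2 * a + F3 (2 * a) := by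
    rcases le_or_gt (2 * a) (3 ^ n) with h | h
    · have h1 := F3_split (k := n) 1 (t := 2 * a) h
      simp only [one_mul] at h1
      rw [hS1] at h1; push_cast at h1 ⊢; linarith
    · have hsle : 2 * a - 3 ^ n ≤ 3 ^ n := by omega
      have e1 := F3_split (k := n) 2 (t := 2 * a - 3 ^ n) hsle
      have e2 := F3_split (k := n) 1 (t := 2 * a - 3 ^ n) hsle
      have eA : 2 * 3 ^ n + (2 * a - 3 ^ n) = 3 ^ n + 2 * a := by omega
      have eB : 3 ^ n + (2 * a - 3 ^ n) = 2 * a := by omega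
      rw [hS2, eA] at e1
      simp only [one_mul] at e2
      rw [hS1, eB] at e2
      have hc : ((2 * a - 3 ^ n : ℕ) : ℤ) = 2 * a - 3 ^ n := by
        push_cast [Nat.cast_sub (le_of_lt h)]; ring
      rw [hc] at e1 e2
      push_cast at e1 e2 d2 ⊢
      linarith
  have hm : 1 ≤ 2 * 3 ^ n + a := by omega
  have h1 := two_nu (2 * 3 ^ n + a) hm
  have h2 := two_nu a ha
  have harg : 2 * (2 * 3 ^ n + a) = 4 * 3 ^ n + 2 * a := by ring
  rw [harg, d3, d4, d5, d1, d2] at h1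
  have key : 2 * padicValRat 3 (T (2 * 3 ^ n + a)) = 2 * padicValRat 3 (T a) := by
    rw [h1, h2]; push_cast; ring
  linarith
end

section
/- Let n have ternary expansion n = a_0 + a_1·3 + ... + a_r·3^r. Then ν_3(T(n)) = 0 if and only if there exists an index i, 0 ≤ i ≤ r, such that a_0 = ... = a_{i−1} = 0 and each of a_{i+1}, ..., a_r is 0 or 2 (a_i arbitrary). -/
open Nat Finset

/-!
Legendre's formula `2 ν₃(m!) = m - s(m)`, with `s = S 3` the ternary digit sum, gives
`2 ν₃(T n) = ∑_{j<n} (s(n+j) - s(j) - 1) = F n`, where `F n = A(2n) - 2 A(n) - n` and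
`A n = ∑_{m<n} s(m)`. Along the last ternary digit, `F` satisfies a linear recursion together with
`D m = s(2m) - s(m)` and `G m = s(2m+1) - s(m) - 1`. Induction on the digits shows that `F ≥ 0`,
that `F`, `D`, `G` vanish when all digits lie in `{0, 2}`, and that otherwise
`F (3m+1), F (3m+2) ≥ 2`. As `F (3n) = 3 F n`, `F n = 0` exactly when `n = 3^i (3m + a)` with
`a ∈ {1, 2}` and all digits of `m` in `{0, 2}`.
-/

namespace ASMValuation

@[elab_as_elim]
theorem ternary_induction {P : ℕ → Prop} (n : ℕ) (zero : P 0)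
    (mul : ∀ m, 0 < m → P m → P (3 * m)) (add_one : ∀ m, P m → P (3 * m + 1))
    (add_two : ∀ m, P m → P (3 * m + 2)) : P n := by
  induction n using Nat.strong_induction_on with
  | _ n ih =>
    rcases Nat.eq_zero_or_pos n with rfl | hn
    · exact zero
    have ih' := ih (n / 3) (Nat.div_lt_self hn (by norm_num))
    obtain h | h | h : n % 3 = 0 ∨ n % 3 = 1 ∨ n % 3 = 2 := by omega
    · rw [show n = 3 * (n / 3) by omega]
      exact mul _ (by omega) ih'
    · rw [show n = 3 * (n / 3) + 1 by omega]
      exact add_one _ ih'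
    · rw [show n = 3 * (n / 3) + 2 by omega]
      exact add_two _ ih'

lemma digits_mul_add {b : ℕ} (hb : 1 < b) (m : ℕ) {r : ℕ} (hr : r < b)
    (h : r ≠ 0 ∨ m ≠ 0) :
    Nat.digits b (b * m + r) = r :: Nat.digits b m := by
  rw [add_comm, Nat.digits_add b hb r m hr h]

lemma S_mul_add {b : ℕ} (hb : 1 < b) (m : ℕ) {r : ℕ} (hr : r < b) :
    S b (b * m + r) = S b m + r := by
  by_cases h : r ≠ 0 ∨ m ≠ 0
  · rw [S, digits_mul_add hb m hr h, List.sum_cons, S, add_comm]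
  · obtain ⟨rfl, rfl⟩ : r = 0 ∧ m = 0 := by tauto
    rfl

lemma S_three_mul (m : ℕ) : S 3 (3 * m) = S 3 m :=
  S_mul_add (by norm_num) m (r := 0) (by norm_num)

lemma S_three_mul_add_one (m : ℕ) : S 3 (3 * m + 1) = S 3 m + 1 :=
  S_mul_add (by norm_num) m (by norm_num)

lemma S_three_mul_add_two (m : ℕ) : S 3 (3 * m + 2) = S 3 m + 2 :=
  S_mul_add (by norm_num) m (by norm_num)

def A (n : ℕ) : ℤ := ∑ m ∈ range n, (S 3 m : ℤ)

def F (n : ℕ) : ℤ := A (2 * n) - 2 * A n - n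

def D (m : ℕ) : ℤ := S 3 (2 * m) - S 3 m

def G (m : ℕ) : ℤ := S 3 (2 * m + 1) - S 3 m - 1

lemma A_succ (n : ℕ) : A (n + 1) = A n + S 3 n := sum_range_succ _ _

lemma A_three_mul (m : ℕ) : A (3 * m) = 3 * A m + 3 * m := by
  induction m with
  | zero => simp [A]
  | succ m ih =>
    rw [show 3 * (m + 1) = 3 * m + 1 + 1 + 1 by ring, A_succ, A_succ, A_succ, ih, A_succ,
      S_three_mul, show 3 * m + 1 + 1 = 3 * m + 2 by ring, S_three_mul_add_one, S_three_mul_add_two]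
    push_cast
    ring

lemma A_three_mul_add_one (m : ℕ) : A (3 * m + 1) = 3 * A m + 3 * m + S 3 m := by
  rw [A_succ, A_three_mul, S_three_mul]

lemma A_three_mul_add_two (m : ℕ) : A (3 * m + 2) = 3 * A m + 3 * m + 2 * S 3 m + 1 := by
  rw [A_succ, A_three_mul_add_one, S_three_mul_add_one]
  push_cast
  ring

lemma F_three_mul (m : ℕ) : F (3 * m) = 3 * F m := by
  rw [F, F, show 2 * (3 * m) = 3 * (2 * m) by ring, A_three_mul, A_three_mul]
  push_cast
  ring

lemma F_three_mul_add_one (m : ℕ) : F (3 * m + 1) = 3 * F m + 2 * D m := by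
  rw [F, F, D, show 2 * (3 * m + 1) = 3 * (2 * m) + 2 by ring, A_three_mul_add_two,
    A_three_mul_add_one]
  push_cast
  ring

lemma F_three_mul_add_two (m : ℕ) : F (3 * m + 2) = 3 * F m + 3 * D m + G m := by
  rw [F, F, D, G, show 2 * (3 * m + 2) = 3 * (2 * m + 1) + 1 by ring, A_three_mul_add_one,
    A_succ, A_three_mul_add_two]
  push_cast
  ring

lemma D_three_mul (m : ℕ) : D (3 * m) = D m := by
  rw [D, D, show 2 * (3 * m) = 3 * (2 * m) by ring, S_three_mul, S_three_mul]

lemma D_three_mul_add_one (m : ℕ) : D (3 * m + 1) = D m + 1 := by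
  rw [D, D, show 2 * (3 * m + 1) = 3 * (2 * m) + 2 by ring, S_three_mul_add_two,
    S_three_mul_add_one]
  push_cast
  ring

lemma D_three_mul_add_two (m : ℕ) : D (3 * m + 2) = G m := by
  rw [D, G, show 2 * (3 * m + 2) = 3 * (2 * m + 1) + 1 by ring, S_three_mul_add_one,
    S_three_mul_add_two]
  push_cast
  ring

lemma G_three_mul (m : ℕ) : G (3 * m) = D m := by
  rw [G, D, show 2 * (3 * m) + 1 = 3 * (2 * m) + 1 by ring, S_three_mul_add_one, S_three_mul]
  push_cast
  ring

lemma G_three_mul_add_one (m : ℕ) : G (3 * m + 1) = G m - 1 := by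
  rw [G, G, show 2 * (3 * m + 1) + 1 = 3 * (2 * m + 1) by ring, S_three_mul, S_three_mul_add_one]
  push_cast
  ring

lemma G_three_mul_add_two (m : ℕ) : G (3 * m + 2) = G m := by
  rw [G, G, show 2 * (3 * m + 2) + 1 = 3 * (2 * m + 1) + 2 by ring, S_three_mul_add_two,
    S_three_mul_add_two]
  push_cast
  ring

-- The combinations needed to keep `F (3m+1) = 3F + 2D` and `F (3m+2) = 3F + 3D + G` nonnegative.
lemma F_D_G_nonneg (m : ℕ) : 0 ≤ F m ∧ 0 ≤ F m + 2 * D m ∧ 0 ≤ F m + D m + G m := by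
  induction m using ternary_induction with
  | zero => simp [F, D, G, A, S]
  | mul m _ ih =>
    rw [F_three_mul, D_three_mul, G_three_mul]
    omega
  | add_one m ih =>
    rw [F_three_mul_add_one, D_three_mul_add_one, G_three_mul_add_one]
    omega
  | add_two m ih =>
    rw [F_three_mul_add_two, D_three_mul_add_two, G_three_mul_add_two]
    omega

def ZeroTwoDigits (m : ℕ) : Prop := ∀ d ∈ Nat.digits 3 m, d = 0 ∨ d = 2

lemma zeroTwoDigits_three_mul (m : ℕ) : ZeroTwoDigits (3 * m) ↔ ZeroTwoDigits m := by
  rcases Nat.eq_zero_or_pos m with rfl | hm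
  · rfl
  · rw [ZeroTwoDigits, ← add_zero (3 * m),
      digits_mul_add (by norm_num) m (by norm_num) (by omega)]
    simp [ZeroTwoDigits]

lemma not_zeroTwoDigits_three_mul_add_one (m : ℕ) : ¬ ZeroTwoDigits (3 * m + 1) := by
  rw [ZeroTwoDigits, digits_mul_add (by norm_num) m (by norm_num) (by omega)]
  simp

lemma zeroTwoDigits_three_mul_add_two (m : ℕ) :
    ZeroTwoDigits (3 * m + 2) ↔ ZeroTwoDigits m := by
  rw [ZeroTwoDigits, digits_mul_add (by norm_num) m (by norm_num) (by omega)]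
  simp [ZeroTwoDigits]

lemma F_D_G_eq_zero {m : ℕ} (hm : ZeroTwoDigits m) : F m = 0 ∧ D m = 0 ∧ G m = 0 := by
  induction m using ternary_induction with
  | zero => simp [F, D, G, A, S]
  | mul m _ ih =>
    rw [F_three_mul, D_three_mul, G_three_mul]
    have := ih ((zeroTwoDigits_three_mul m).1 hm)
    omega
  | add_one m _ => exact absurd hm (not_zeroTwoDigits_three_mul_add_one m)
  | add_two m ih =>
    rw [F_three_mul_add_two, D_three_mul_add_two, G_three_mul_add_two]
    have := ih ((zeroTwoDigits_three_mul_add_two m).1 hm)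
    omega

lemma two_le_F_three_mul_add {m : ℕ} (hm : ¬ ZeroTwoDigits m) :
    2 ≤ F (3 * m + 1) ∧ 2 ≤ F (3 * m + 2) := by
  rw [F_three_mul_add_one, F_three_mul_add_two]
  induction m using ternary_induction with
  | zero => exact absurd (by simp [ZeroTwoDigits]) hm
  | mul m _ ih =>
    rw [F_three_mul, D_three_mul, G_three_mul]
    have := ih (by rwa [← zeroTwoDigits_three_mul])
    have := F_D_G_nonneg m
    omega
  | add_one m _ =>
    rw [F_three_mul_add_one, D_three_mul_add_one, G_three_mul_add_one]
    have := F_D_G_nonneg m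
    omega
  | add_two m ih =>
    rw [F_three_mul_add_two, D_three_mul_add_two, G_three_mul_add_two]
    have := ih (by rwa [← zeroTwoDigits_three_mul_add_two])
    have := F_D_G_nonneg m
    omega

lemma F_three_mul_add_eq_zero_iff {r : ℕ} (hr : r = 1 ∨ r = 2) (m : ℕ) :
    F (3 * m + r) = 0 ↔ ZeroTwoDigits m := by
  by_cases hm : ZeroTwoDigits m
  · obtain ⟨hF, hD, hG⟩ := F_D_G_eq_zero hm
    rcases hr with rfl | rfl <;> simp [F_three_mul_add_one, F_three_mul_add_two, hF, hD, hG, hm]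
  · have := two_le_F_three_mul_add hm
    rcases hr with rfl | rfl <;> simp only [hm, iff_false] <;> omega

def Admissible (L : List ℕ) : Prop :=
  ∃ i < L.length, (∀ k < i, L.getD k 0 = 0) ∧
    ∀ k, i < k → k < L.length → L.getD k 0 = 0 ∨ L.getD k 0 = 2

lemma forall_mem_iff_getD {L : List ℕ} {P : ℕ → Prop} :
    (∀ d ∈ L, P d) ↔ ∀ k < L.length, P (L.getD k 0) := by
  simp +contextual [List.forall_mem_iff_getElem]

lemma forall_gt_getD_cons {a i : ℕ} {L : List ℕ} :
    (∀ k, i < k → k < L.length + 1 → (a :: L).getD k 0 = 0 ∨ (a :: L).getD k 0 = 2) ↔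
      ∀ k, i ≤ k → k < L.length → L.getD k 0 = 0 ∨ L.getD k 0 = 2 := by
  constructor
  · intro h k hik hk
    simpa using h (k + 1) (by omega) (by omega)
  · rintro h (_ | k) hik hk
    · omega
    · simpa using h k (by omega) (by omega)

lemma admissible_cons (a : ℕ) (L : List ℕ) :
    Admissible (a :: L) ↔ (∀ d ∈ L, d = 0 ∨ d = 2) ∨ (a = 0 ∧ Admissible L) := by
  simp only [Admissible, List.length_cons, Nat.exists_lt_succ_left, Nat.forall_lt_succ_left,
    forall_gt_getD_cons, List.getD_cons_zero, List.getD_cons_succ, forall_mem_iff_getD,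
    Nat.add_one_le_iff, Nat.not_lt_zero, Nat.zero_le, and_assoc, and_left_comm (b := a = 0),
    exists_and_left, IsEmpty.forall_iff, implies_true, forall_const, true_and]

lemma F_eq_zero_iff {n : ℕ} (hn : 0 < n) : F n = 0 ↔ Admissible (Nat.digits 3 n) := by
  induction n using ternary_induction with
  | zero => omega
  | mul m hm ih =>
    rw [F_three_mul, ← add_zero (3 * m), digits_mul_add (by norm_num) m (by norm_num) (by omega),
      admissible_cons, ← ih hm]
    constructor
    · exact fun h => .inr ⟨rfl, by omega⟩
    · rintro (h | ⟨-, h⟩)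
      · simp [(F_D_G_eq_zero h).1]
      · omega
  | add_one m _ =>
    rw [digits_mul_add (by norm_num) m (by norm_num) (by omega), admissible_cons,
      F_three_mul_add_eq_zero_iff (by omega)]
    simp [ZeroTwoDigits]
  | add_two m _ =>
    rw [digits_mul_add (by norm_num) m (by norm_num) (by omega), admissible_cons,
      F_three_mul_add_eq_zero_iff (by omega)]
    simp [ZeroTwoDigits]

lemma padicValRat_finset_prod {p : ℕ} [Fact p.Prime] {ι : Type*} (s : Finset ι) {f : ι → ℚ}
    (hf : ∀ i ∈ s, f i ≠ 0) :
    padicValRat p (∏ i ∈ s, f i) = ∑ i ∈ s, padicValRat p (f i) := by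
  induction s using Finset.cons_induction with
  | empty => simp
  | cons a s _ ih =>
    rw [prod_cons, sum_cons, padicValRat.mul (hf a (mem_cons_self a s))
      (prod_ne_zero_iff.2 fun i hi => hf i (mem_cons_of_mem hi)),
      ih fun i hi => hf i (mem_cons_of_mem hi)]

lemma sub_one_mul_padicValNat_factorial_eq_sub_S {p : ℕ} [hp : Fact p.Prime] (m : ℕ) :
    ((p : ℤ) - 1) * padicValNat p m ! = m - S p m := by
  have h := sub_one_mul_padicValNat_factorial (p := p) m
  have hle := Nat.digit_sum_le p m
  have hp1 := hp.out.one_le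
  rw [S, ← Nat.cast_sub hle, ← h, Nat.cast_mul, Nat.cast_sub hp1, Nat.cast_one]

lemma sum_range_two_mul_add_one_sub (n : ℕ) : ∑ j ∈ range n, (2 * (j : ℤ) + 1 - n) = 0 := by
  have hodd : ∑ j ∈ range n, (2 * (j : ℤ) + 1) = n * n := by
    induction n with
    | zero => simp
    | succ k ih =>
      rw [sum_range_succ, ih]
      push_cast
      ring
  simp [sum_sub_distrib, hodd]

lemma sum_range_S_eq_F (n : ℕ) : ∑ j ∈ range n, ((S 3 (n + j) : ℤ) - S 3 j - 1) = F n := by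
  rw [sum_sub_distrib, sum_sub_distrib, F, two_mul, A, A, sum_range_add]
  simp only [sum_const, card_range, Int.nsmul_eq_mul, mul_one]
  ring

lemma two_mul_padicValRat_T (n : ℕ) : 2 * padicValRat 3 (T n) = F n := by
  have hfac : ∀ m, ((m ! : ℕ) : ℚ) ≠ 0 := fun m => by positivity
  calc 2 * padicValRat 3 (T n)
      = ∑ j ∈ range n, 2 * ((padicValNat 3 (3 * j + 1)! : ℤ) - padicValNat 3 (n + j)!) := by
        rw [T, padicValRat_finset_prod _ fun j _ => div_ne_zero (hfac _) (hfac _), mul_sum]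
        refine sum_congr rfl fun j _ => ?_
        rw [padicValRat.div (hfac _) (hfac _), padicValRat.of_nat, padicValRat.of_nat]
    _ = ∑ j ∈ range n, (((S 3 (n + j) : ℤ) - S 3 j - 1) + (2 * (j : ℤ) + 1 - n)) := by
        refine sum_congr rfl fun j _ => ?_
        have h₁ := sub_one_mul_padicValNat_factorial_eq_sub_S (p := 3) (3 * j + 1)
        have h₂ := sub_one_mul_padicValNat_factorial_eq_sub_S (p := 3) (n + j)
        rw [S_three_mul_add_one] at h₁
        push_cast at h₁ h₂ ⊢
        linarith
    _ = F n := by rw [sum_add_distrib, sum_range_S_eq_F, sum_range_two_mul_add_one_sub, add_zero]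

end ASMValuation

theorem stmt18 (n : ℕ) (hn : 0 < n) :
    padicValRat 3 (T n) = 0 ↔
      ∃ i < (Nat.digits 3 n).length,
        (∀ k < i, (Nat.digits 3 n).getD k 0 = 0) ∧
        (∀ k, i < k → k < (Nat.digits 3 n).length →
          (Nat.digits 3 n).getD k 0 = 0 ∨ (Nat.digits 3 n).getD k 0 = 2) := by
  refine Iff.trans ?_ (ASMValuation.F_eq_zero_iff hn)
  have := ASMValuation.two_mul_padicValRat_T n
  omega
end

section
/- For every prime p ≥ 3 and every positive integer n, T_p(n) := ∏_{j=0}^{n−1} (pj+1)!/(n+j)! is an integer; moreover ν_p(T_p(pn)) = p·ν_p(T_p(n)) + p(p−3)n²/2, and consequently ν_p(T_p(p^n)) = p^n(p−3)(p^n−1)/(2(p−1)). -/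
open Nat Finset

/-!
Integrality: since `(3j+1)! ∣ (pj+1)!`, Legendre's formula reduces it to
`∑_{j<n} ⌊(n+j)/m⌋ ≤ ∑_{j<n} ⌊(3j+1)/m⌋` for every `m`. Both sides have numerators with the same
sum, so this is equivalent to the reverse inequality between the sums of residues mod `m`. The
residue sums are additive under `n ↦ n + m` (periodicity), which reduces everything to `n ≤ m`,
where every quotient is at most `2` and the two sides can be counted.

Valuations: `ν_p((pq+r)!) = q + ν_p(q!)` for `r < p`. With `W(n) = ∑_{j<n} ν_p(j!)` this gives
`ν_p(T_p(n)) = n(n-1)/2 + 2W(n) - W(2n)` and `W(pn) = p(W(n) + n(n-1)/2)`, from which the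
recursion is a polynomial identity; iterating it from `T_p(1) = 1` gives the closed form.
-/

theorem Function.Periodic.sum_range_add {M : Type*} [AddCommMonoid M] {f : ℕ → M} {m : ℕ}
    (hf : Function.Periodic f m) (N : ℕ) :
    ∑ j ∈ range m, f (N + j) = ∑ j ∈ range m, f j := by
  have hIco : ∑ j ∈ range m, f (N + j) = ∑ i ∈ Ico N (N + m), f i := by
    rw [sum_Ico_eq_sum_range, Nat.add_sub_cancel_left]
  rw [hIco, ← sum_congr rfl fun i _ => hf.map_mod_nat i,
    ← sum_image (f := f) (Nat.mod_injOn_Ico N m), Nat.image_Ico_mod]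

theorem sum_div_le_sum_div_iff_sum_mod_le {ι : Type*} {s : Finset ι} {f g : ι → ℕ} {m : ℕ}
    (hm : 0 < m) (h : ∑ i ∈ s, f i = ∑ i ∈ s, g i) :
    ∑ i ∈ s, f i / m ≤ ∑ i ∈ s, g i / m ↔ ∑ i ∈ s, g i % m ≤ ∑ i ∈ s, f i % m := by
  have split : ∀ u : ι → ℕ, m * ∑ i ∈ s, u i / m + ∑ i ∈ s, u i % m = ∑ i ∈ s, u i := fun u => by
    rw [mul_sum, ← sum_add_distrib]
    exact sum_congr rfl fun i _ => div_add_mod (u i) m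
  have hf := split f
  have hg := split g
  rw [← Nat.mul_le_mul_left_iff hm]
  omega

theorem sum_range_three_mul_add_one_eq (n : ℕ) :
    ∑ j ∈ range n, (3 * j + 1) = ∑ j ∈ range n, (n + j) := by
  induction n with
  | zero => rfl
  | succ n ih =>
    have shift : ∑ j ∈ range n, (n + 1 + j) = ∑ j ∈ range n, (n + j) + n := by
      rw [sum_congr rfl fun j _ => add_right_comm n 1 j, sum_add_distrib, sum_const, card_range,
        smul_eq_mul, mul_one]
    rw [sum_range_succ, ih, sum_range_succ, shift]
    ring

theorem sum_range_ite_le (c n : ℕ) : ∑ j ∈ range n, (if c ≤ j then 1 else 0) = n - c := by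
  induction n with
  | zero => simp
  | succ n ih => rw [sum_range_succ, ih]; split <;> omega

theorem sum_range_add_div_le_of_le {m n : ℕ} (hnm : n ≤ m) :
    ∑ j ∈ range n, (n + j) / m ≤ ∑ j ∈ range n, (3 * j + 1) / m := by
  have hL : ∀ j < n, (n + j) / m = if m - n ≤ j then 1 else 0 := fun j hj => by
    split_ifs
    · exact Nat.div_eq_of_lt_le (by omega) (by omega)
    · exact Nat.div_eq_of_lt (by omega)
  have hR : ∀ j < n, (3 * j + 1) / m =
      (if (m + 1) / 3 ≤ j then 1 else 0) + (if (2 * m + 1) / 3 ≤ j then 1 else 0) := fun j hj => by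
    split_ifs
    · exact Nat.div_eq_of_lt_le (by omega) (by omega)
    · exact Nat.div_eq_of_lt_le (by omega) (by omega)
    · omega
    · exact Nat.div_eq_of_lt (by omega)
  rw [sum_congr rfl fun j hj => hL j (mem_range.1 hj),
    sum_congr rfl fun j hj => hR j (mem_range.1 hj), sum_add_distrib, sum_range_ite_le,
    sum_range_ite_le, sum_range_ite_le]
  omega

theorem sum_range_three_mul_add_one_mod_add (k m : ℕ) :
    ∑ j ∈ range (k + m), (3 * j + 1) % m =
      ∑ j ∈ range k, (3 * j + 1) % m + ∑ j ∈ range m, (3 * j + 1) % m := by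
  rw [sum_range_add]
  congr 1
  refine Function.Periodic.sum_range_add (f := fun j => (3 * j + 1) % m) (fun j => ?_) k
  show (3 * (j + m) + 1) % m = (3 * j + 1) % m
  rw [show 3 * (j + m) + 1 = 3 * j + 1 + m * 3 by ring, Nat.add_mul_mod_self_left]

theorem sum_range_add_mod_add (k m : ℕ) :
    ∑ j ∈ range (k + m), (k + m + j) % m =
      ∑ j ∈ range k, (k + j) % m + ∑ j ∈ range m, (m + j) % m := by
  have hper := Nat.periodic_mod m
  simp only [add_right_comm k m, Nat.add_mod_right, Nat.add_mod_left]
  rw [sum_range_add]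
  simp only [← add_assoc]
  rw [hper.sum_range_add]

theorem sum_range_three_mul_add_one_mod_le {m : ℕ} (hm : 0 < m) (n : ℕ) :
    ∑ j ∈ range n, (3 * j + 1) % m ≤ ∑ j ∈ range n, (n + j) % m := by
  induction n using Nat.strong_induction_on with
  | _ n ih =>
    rcases le_or_gt n m with hnm | hmn
    · exact (sum_div_le_sum_div_iff_sum_mod_le hm (sum_range_three_mul_add_one_eq n).symm).1
        (sum_range_add_div_le_of_le hnm)
    · obtain ⟨k, rfl⟩ : ∃ k, n = k + m := ⟨n - m, by omega⟩
      rw [sum_range_three_mul_add_one_mod_add, sum_range_add_mod_add]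
      exact _root_.add_le_add (ih k (by omega)) (ih m hmn)

theorem sum_range_add_div_le (m n : ℕ) :
    ∑ j ∈ range n, (n + j) / m ≤ ∑ j ∈ range n, (3 * j + 1) / m := by
  rcases Nat.eq_zero_or_pos m with rfl | hm
  · simp
  exact (sum_div_le_sum_div_iff_sum_mod_le hm (sum_range_three_mul_add_one_eq n).symm).2
    (sum_range_three_mul_add_one_mod_le hm n)

theorem prod_factorial_add_dvd_prod_factorial_three_mul_add_one (n : ℕ) :
    ∏ j ∈ range n, (n + j)! ∣ ∏ j ∈ range n, (3 * j + 1)! := by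
  rw [← Nat.factorization_prime_le_iff_dvd (prod_ne_zero_iff.2 fun j _ => factorial_ne_zero _)
    (prod_ne_zero_iff.2 fun j _ => factorial_ne_zero _)]
  intro q hq
  have := Fact.mk hq
  have legendre : ∀ x < 3 * n, padicValNat q x ! = ∑ i ∈ Ico 1 (3 * n), x / q ^ i :=
    fun x hx => padicValNat_factorial ((Nat.log_le_self q x).trans_lt hx)
  rw [factorization_prod fun j _ => factorial_ne_zero _,
    factorization_prod fun j _ => factorial_ne_zero _, Finsupp.finsetSum_apply,
    Finsupp.finsetSum_apply]
  simp only [factorization_def _ hq]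
  rw [sum_congr rfl fun j hj => legendre (n + j) (by simp at hj; omega),
    sum_congr rfl fun j hj => legendre (3 * j + 1) (by simp at hj; omega), sum_comm,
    sum_comm (s := range n)]
  exact sum_le_sum fun i _ => sum_range_add_div_le (q ^ i) n

theorem Tp_eq_div (p n : ℕ) :
    Tp p n = ((∏ j ∈ range n, (p * j + 1)! : ℕ) : ℚ) / ((∏ j ∈ range n, (n + j)! : ℕ) : ℚ) := by
  rw [Tp, prod_div_distrib, Nat.cast_prod, Nat.cast_prod]

theorem exists_int_Tp_eq {p : ℕ} (hp : 3 ≤ p) (n : ℕ) : ∃ z : ℤ, Tp p n = z := by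
  have hdvd : ∏ j ∈ range n, (n + j)! ∣ ∏ j ∈ range n, (p * j + 1)! :=
    (prod_factorial_add_dvd_prod_factorial_three_mul_add_one n).trans <|
      prod_dvd_prod_of_dvd _ _ fun j _ => factorial_dvd_factorial (by gcongr)
  refine ⟨(((∏ j ∈ range n, (p * j + 1)!) / ∏ j ∈ range n, (n + j)! : ℕ) : ℤ), ?_⟩
  rw [Tp_eq_div, Int.cast_natCast, Nat.cast_div hdvd]
  exact_mod_cast (prod_ne_zero_iff.2 fun j _ => factorial_ne_zero _)

theorem Finset.sum_range_mul {M : Type*} [AddCommMonoid M] (f : ℕ → M) (p n : ℕ) :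
    ∑ j ∈ range (p * n), f j = ∑ q ∈ range n, ∑ r ∈ range p, f (p * q + r) := by
  induction n with
  | zero => simp
  | succ n ih => rw [Nat.mul_succ, sum_range_add, ih, sum_range_succ]

theorem sum_range_natCast_rat (n : ℕ) : ∑ j ∈ range n, (j : ℚ) = n * (n - 1) / 2 := by
  induction n with
  | zero => simp
  | succ n ih => rw [sum_range_succ, ih]; push_cast; ring

section Valuation

variable {p : ℕ} [hp : Fact p.Prime]

theorem padicValNat_finset_prod {ι : Type*} {s : Finset ι} {f : ι → ℕ}
    (hf : ∀ i ∈ s, f i ≠ 0) :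
    padicValNat p (∏ i ∈ s, f i) = ∑ i ∈ s, padicValNat p (f i) := by
  simp only [← factorization_def _ hp.out, factorization_prod hf, Finsupp.finsetSum_apply]

theorem padicValNat_factorial_mul_add_of_lt (q : ℕ) {r : ℕ} (hr : r < p) :
    padicValNat p (p * q + r)! = padicValNat p q ! + q := by
  rw [padicValNat_factorial_mul_add q hr, padicValNat_factorial_mul]

theorem sum_range_mul_padicValNat_factorial (n : ℕ) :
    ∑ j ∈ range (p * n), padicValNat p j ! = p * ∑ q ∈ range n, (padicValNat p q ! + q) := by
  rw [sum_range_mul, mul_sum]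
  refine sum_congr rfl fun q _ => ?_
  rw [sum_congr rfl fun r hr => padicValNat_factorial_mul_add_of_lt q (mem_range.1 hr),
    sum_const, card_range, smul_eq_mul]

theorem padicValRat_Tp (n : ℕ) :
    (padicValRat p (Tp p n) : ℚ) = n * (n - 1) / 2 + 2 * ∑ j ∈ range n, (padicValNat p j ! : ℚ)
      - ∑ j ∈ range (2 * n), (padicValNat p j ! : ℚ) := by
  have hnum : ∑ j ∈ range n, padicValNat p (p * j + 1)! = ∑ j ∈ range n, (padicValNat p j ! + j) :=
    sum_congr rfl fun j _ => padicValNat_factorial_mul_add_of_lt j hp.out.one_lt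
  have hden : ∑ j ∈ range (2 * n), (padicValNat p j ! : ℚ) =
      ∑ j ∈ range n, (padicValNat p j ! : ℚ) + ∑ j ∈ range n, (padicValNat p (n + j)! : ℚ) := by
    rw [two_mul, sum_range_add]
  rw [Tp_eq_div, padicValRat.div (by positivity) (by positivity), padicValRat.of_nat,
    padicValRat.of_nat, padicValNat_finset_prod fun j _ => factorial_ne_zero _,
    padicValNat_finset_prod fun j _ => factorial_ne_zero _, hnum, ← sum_range_natCast_rat]
  simp only [Nat.cast_sum, Nat.cast_add, Int.cast_sub, Int.cast_sum, Int.cast_add, Int.cast_natCast,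
    sum_add_distrib, hden]
  ring

theorem padicValRat_Tp_mul (n : ℕ) :
    (padicValRat p (Tp p (p * n)) : ℚ) =
      p * padicValRat p (Tp p n) + p * (p - 3) * n ^ 2 / 2 := by
  have block : ∀ k : ℕ, ∑ j ∈ range (p * k), (padicValNat p j ! : ℚ) =
      p * (∑ j ∈ range k, (padicValNat p j ! : ℚ) + k * (k - 1) / 2) := fun k => by
    rw [← sum_range_natCast_rat, ← sum_add_distrib]
    exact_mod_cast sum_range_mul_padicValNat_factorial k
  rw [padicValRat_Tp, padicValRat_Tp, mul_left_comm 2 p n, block, block]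
  push_cast
  ring

theorem padicValRat_Tp_pow (n : ℕ) :
    (padicValRat p (Tp p (p ^ n)) : ℚ) = p ^ n * (p - 3) * (p ^ n - 1) / (2 * (p - 1)) := by
  have hp1 : (p : ℚ) - 1 ≠ 0 := sub_ne_zero.2 (by exact_mod_cast hp.out.ne_one)
  induction n with
  | zero => simp [Tp]
  | succ n ih =>
    rw [pow_succ', padicValRat_Tp_mul, ih]
    push_cast
    field_simp
    ring

end Valuation

theorem stmt19 (p : ℕ) (hp : p.Prime) (hp3 : 3 ≤ p) :
    (∀ n : ℕ, 0 < n → ∃ z : ℤ, Tp p n = (z : ℚ)) ∧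
    (∀ n : ℕ, 0 < n →
      (padicValRat p (Tp p (p * n)) : ℚ) =
        (p : ℚ) * padicValRat p (Tp p n) + (p : ℚ) * ((p : ℚ) - 3) * (n : ℚ) ^ 2 / 2) ∧
    (∀ n : ℕ,
      (padicValRat p (Tp p (p ^ n)) : ℚ) =
        (p : ℚ) ^ n * ((p : ℚ) - 3) * ((p : ℚ) ^ n - 1) / (2 * ((p : ℚ) - 1))) := by
  have := Fact.mk hp
  exact ⟨fun n _ => exists_int_Tp_eq hp3 n, fun n _ => padicValRat_Tp_mul n, padicValRat_Tp_pow⟩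
end
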